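/- If G is a finite graph with minimum degree at least 1 and n ≥ 2, then the game total domination number of G equals the game Z-domination number of the lexicographic product of G with the edgeless graph on n vertices: γ_tg(G) = γ_Zg(G ∘ K̄_n). -/

import Mathlib

open Finset

open scoped Classical

noncomputable section

namespace ZGamePaper

variable {V : Type*} {W : Type*}

/-- The closed neighborhood `N[v]` of a vertex as a `Finset`. -/
def closedNF [Fintype V] (G : SimpleGraph V) (v : V) : Finset V :=
  Finset.univ.filter fun x => x = v ∨ G.Adj v x

/-- The open neighborhood `N(v)` of a vertex as a `Finset`. -/
def openNF [Fintype V] (G : SimpleGraph V) (v : V) : Finset V :=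
  Finset.univ.filter fun x => G.Adj v x

lemma openNF_subset_closedNF [Fintype V] (G : SimpleGraph V) (v : V) :
    openNF G v ⊆ closedNF G v := by
  intro x hx
  simp only [openNF, closedNF, mem_filter] at hx ⊢
  exact ⟨hx.1, Or.inr hx.2⟩

lemma measure_dec [Fintype V] {A C : Finset V} {w : V} (hw : w ∈ C) (hwA : w ∉ A) :
    (Finset.univ \ (A ∪ C)).card < (Finset.univ \ A).card := by
  apply Finset.card_lt_card
  rw [Finset.ssubset_iff_of_subset
    (Finset.sdiff_subset_sdiff (le_refl _) Finset.subset_union_left)]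
  refine ⟨w, ?_, ?_⟩
  · simp [hwA]
  · simp [hw]

/-! ### The Z-domination game -/

/-- The set of legal moves in the Z-domination game, given the set `A` of
already dominated vertices: a vertex `v` is legal if `N(v) ⊄ A`. -/
def zLegal [Fintype V] (G : SimpleGraph V) (A : Finset V) : Finset V :=
  Finset.univ.filter fun v => ¬ openNF G v ⊆ A

lemma zLegal_dec [Fintype V] (G : SimpleGraph V) (A : Finset V) {v : V}
    (hv : v ∈ zLegal G A) :
    (Finset.univ \ (A ∪ closedNF G v)).card < (Finset.univ \ A).card := by
  simp only [zLegal, mem_filter] at hv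
  obtain ⟨w, hw1, hw2⟩ := Finset.not_subset.mp hv.2
  exact measure_dec (openNF_subset_closedNF G v hw1) hw2

/-- The optimal number of remaining moves in the Z-domination game played on `G`,
where `A` is the set of already dominated vertices and `turn = true` iff it is
Dominator's (the minimizer's) turn. -/
def zVal [Fintype V] (G : SimpleGraph V) (turn : Bool) (A : Finset V) : ℕ :=
  if h : (zLegal G A).Nonempty then
    if turn then
      1 + ((zLegal G A).attach.inf' h.attach fun v => zVal G false (A ∪ closedNF G v.1))
    else
      1 + ((zLegal G A).attach.sup' h.attach fun v => zVal G true (A ∪ closedNF G v.1))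
  else 0
termination_by (Finset.univ \ A).card
decreasing_by
  · exact zLegal_dec G A v.2
  · exact zLegal_dec G A v.2

/-- The game Z-domination number `γ_Zg(G)` (Dominator starts). -/
def gammaZg [Fintype V] (G : SimpleGraph V) : ℕ := zVal G true ∅

/-- The Staller-start game Z-domination number `γ'_Zg(G)`. -/
def gammaZg' [Fintype V] (G : SimpleGraph V) : ℕ := zVal G false ∅

/-! ### The (ordinary) domination game -/

/-- The set of legal moves in the domination game: `v` is legal if `N[v] ⊄ A`.
This set is nonempty if and only if `A ≠ V(G)`. -/
def dLegal [Fintype V] (G : SimpleGraph V) (A : Finset V) : Finset V :=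
  Finset.univ.filter fun v => ¬ closedNF G v ⊆ A

lemma dLegal_dec [Fintype V] (G : SimpleGraph V) (A : Finset V) {v : V}
    (hv : v ∈ dLegal G A) :
    (Finset.univ \ (A ∪ closedNF G v)).card < (Finset.univ \ A).card := by
  simp only [dLegal, mem_filter] at hv
  obtain ⟨w, hw1, hw2⟩ := Finset.not_subset.mp hv.2
  exact measure_dec hw1 hw2

/-- The optimal number of remaining moves in the domination game on `G`, with `A`
the set of already dominated vertices; `turn = true` iff it is Dominator's turn.
(There is no legal move iff `A = V(G)`.) -/
def dVal [Fintype V] (G : SimpleGraph V) (turn : Bool) (A : Finset V) : ℕ :=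
  if h : (dLegal G A).Nonempty then
    if turn then
      1 + ((dLegal G A).attach.inf' h.attach fun v => dVal G false (A ∪ closedNF G v.1))
    else
      1 + ((dLegal G A).attach.sup' h.attach fun v => dVal G true (A ∪ closedNF G v.1))
  else 0
termination_by (Finset.univ \ A).card
decreasing_by
  · exact dLegal_dec G A v.2
  · exact dLegal_dec G A v.2

/-- The game domination number `γ_g(G)` (Dominator starts). -/
def gammaGg [Fintype V] (G : SimpleGraph V) : ℕ := dVal G true ∅

/-- The Staller-start game domination number `γ'_g(G)`. -/
def gammaGg' [Fintype V] (G : SimpleGraph V) : ℕ := dVal G false ∅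

/-! ### The total domination game -/

/-- The set of legal moves in the total domination game: `v` is legal if `N(v) ⊄ B`.
For a graph without isolated vertices this set is nonempty iff `B ≠ V(G)`. -/
def tLegal [Fintype V] (G : SimpleGraph V) (B : Finset V) : Finset V :=
  Finset.univ.filter fun v => ¬ openNF G v ⊆ B

lemma tLegal_dec [Fintype V] (G : SimpleGraph V) (B : Finset V) {v : V}
    (hv : v ∈ tLegal G B) :
    (Finset.univ \ (B ∪ openNF G v)).card < (Finset.univ \ B).card := by
  simp only [tLegal, mem_filter] at hv
  obtain ⟨w, hw1, hw2⟩ := Finset.not_subset.mp hv.2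
  exact measure_dec hw1 hw2

/-- The optimal number of remaining moves in the total domination game on `G`,
with `B` the set of already totally dominated vertices; `turn = true` iff it is
Dominator's turn. -/
def tVal [Fintype V] (G : SimpleGraph V) (turn : Bool) (B : Finset V) : ℕ :=
  if h : (tLegal G B).Nonempty then
    if turn then
      1 + ((tLegal G B).attach.inf' h.attach fun v => tVal G false (B ∪ openNF G v.1))
    else
      1 + ((tLegal G B).attach.sup' h.attach fun v => tVal G true (B ∪ openNF G v.1))
  else 0
termination_by (Finset.univ \ B).card
decreasing_by
  · exact tLegal_dec G B v.2
  · exact tLegal_dec G B v.2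

/-- The game total domination number `γ_tg(G)` (Dominator starts). -/
def gammaTg [Fintype V] (G : SimpleGraph V) : ℕ := tVal G true ∅

/-! ### The L-domination game -/

/-- The set of legal moves in the L-domination game, given the set `P` of vertices
played so far: `v` is legal if `v ∉ P` and `N[v] ⊄ N(P)`. -/
def lLegal [Fintype V] (G : SimpleGraph V) (P : Finset V) : Finset V :=
  Finset.univ.filter fun v => v ∉ P ∧ ¬ closedNF G v ⊆ P.biUnion (openNF G)

lemma lLegal_dec [Fintype V] (G : SimpleGraph V) (P : Finset V) {v : V}
    (hv : v ∈ lLegal G P) :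
    (Finset.univ \ insert v P).card < (Finset.univ \ P).card := by
  simp only [lLegal, mem_filter] at hv
  apply Finset.card_lt_card
  rw [Finset.ssubset_iff_of_subset
    (Finset.sdiff_subset_sdiff (le_refl _) (Finset.subset_insert _ _))]
  exact ⟨v, by simp [hv.2.1], by simp⟩

/-- The optimal number of remaining moves in the L-domination game on `G`, with `P`
the set of vertices played so far; `turn = true` iff it is Dominator's turn. -/
def lVal [Fintype V] (G : SimpleGraph V) (turn : Bool) (P : Finset V) : ℕ :=
  if h : (lLegal G P).Nonempty then
    if turn then
      1 + ((lLegal G P).attach.inf' h.attach fun v => lVal G false (insert v.1 P))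
    else
      1 + ((lLegal G P).attach.sup' h.attach fun v => lVal G true (insert v.1 P))
  else 0
termination_by (Finset.univ \ P).card
decreasing_by
  · exact lLegal_dec G P v.2
  · exact lLegal_dec G P v.2

/-- The game L-domination number `γ_Lg(G)` (Dominator starts). -/
def gammaLg [Fintype V] (G : SimpleGraph V) : ℕ := lVal G true ∅

/-! ### Domination number and related notions -/

/-- The domination number `γ(G)`: the minimum size of a set `S` with `N[S] = V(G)`. -/
def gammaNum [Fintype V] (G : SimpleGraph V) : ℕ :=
  sInf {k | ∃ S : Finset V, S.card = k ∧ ∀ v : V, ∃ u ∈ S, v ∈ closedNF G u}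

/-- The partially dominated graph `G|A` has a Z-configuration if there is an
undominated vertex `v` all of whose neighbors are dominated, while every neighbor
of `v` has at least two undominated neighbors. -/
def HasZConfig [Fintype V] (G : SimpleGraph V) (A : Finset V) : Prop :=
  ∃ v : V, v ∉ A ∧ openNF G v ⊆ A ∧ ∀ u ∈ openNF G v, 2 ≤ (openNF G u \ A).card

/-- A graph without isolated vertices is Z-insensitive if for every `D ⊆ V(G)` the
partially dominated graph `G|N[D]` has no Z-configuration. -/
def ZInsensitive [Fintype V] (G : SimpleGraph V) : Prop :=
  (∀ v : V, ∃ u : V, G.Adj v u) ∧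
    ∀ D : Finset V, ¬ HasZConfig G (D.biUnion (closedNF G))

/-- A vertex `w` is the center of a claw if it has three pairwise non-adjacent
neighbors. -/
def IsClawCenter (G : SimpleGraph V) (w : V) : Prop :=
  ∃ a b c : V, G.Adj w a ∧ G.Adj w b ∧ G.Adj w c ∧ a ≠ b ∧ a ≠ c ∧ b ≠ c ∧
    ¬ G.Adj a b ∧ ¬ G.Adj a c ∧ ¬ G.Adj b c

/-- A graph is weakly claw-free if every vertex has a neighbor that is not the
center of a claw. -/
def WeaklyClawFree (G : SimpleGraph V) : Prop :=
  ∀ v : V, ∃ u : V, G.Adj v u ∧ ¬ IsClawCenter G u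

/-- The lexicographic product `G ∘ H`. -/
def lexProd (G : SimpleGraph V) (H : SimpleGraph W) : SimpleGraph (V × W) where
  Adj p q := G.Adj p.1 q.1 ∨ (p.1 = q.1 ∧ H.Adj p.2 q.2)
  symm := ⟨by
    rintro p q (h | ⟨h1, h2⟩)
    · exact Or.inl h.symm
    · exact Or.inr ⟨h1.symm, h2.symm⟩⟩
  loopless := ⟨by
    rintro p (h | ⟨_, h⟩)
    · exact G.loopless.irrefl _ h
    · exact H.loopless.irrefl _ h⟩


/-! In `G ∘ K̄_n` the open neighbourhood of `(w, j)` is the union of the columns over `N(w)`, so a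
move there dominates exactly those columns plus the vertex `(w, j)` itself. Hence a Z-game state
is described by the set `B` of fully dominated columns together with isolated played vertices,
one per column at most, and `(w, j)` is Z-legal iff `w` is legal in the total domination game from
`B`. As `n ≥ 2`, a column holding one played vertex is not fully dominated, so the two games are
bisimilar and have equal values. -/

lemma mem_openNF [Fintype V] {G : SimpleGraph V} {v x : V} : x ∈ openNF G v ↔ G.Adj v x := by
  simp [openNF]

lemma sup'_eq_sup'_of_forall_exists {α β γ : Type*} [LinearOrder α] {s : Finset β}
    {t : Finset γ} (hs : s.Nonempty) (ht : t.Nonempty) {f : β → α} {g : γ → α}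
    (forth : ∀ a ∈ s, ∃ b ∈ t, f a = g b) (back : ∀ b ∈ t, ∃ a ∈ s, f a = g b) :
    s.sup' hs f = t.sup' ht g := by
  refine le_antisymm (sup'_le _ _ fun a ha => ?_) (sup'_le _ _ fun b hb => ?_)
  · obtain ⟨b, hb, hab⟩ := forth a ha
    exact hab ▸ le_sup' g hb
  · obtain ⟨a, ha, hab⟩ := back b hb
    exact hab ▸ le_sup' f ha

lemma inf'_eq_inf'_of_forall_exists {α β γ : Type*} [LinearOrder α] {s : Finset β}
    {t : Finset γ} (hs : s.Nonempty) (ht : t.Nonempty) {f : β → α} {g : γ → α}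
    (forth : ∀ a ∈ s, ∃ b ∈ t, f a = g b) (back : ∀ b ∈ t, ∃ a ∈ s, f a = g b) :
    s.inf' hs f = t.inf' ht g :=
  sup'_eq_sup'_of_forall_exists (α := αᵒᵈ) hs ht forth back

structure IsZTBisimulation {α : Type*} [Fintype α] [Fintype V] (H : SimpleGraph α)
    (G : SimpleGraph V) (R : Finset α → Finset V → Prop) : Prop where
  forth : ∀ A B, R A B → ∀ x ∈ zLegal H A, ∃ w ∈ tLegal G B,
    R (A ∪ closedNF H x) (B ∪ openNF G w)
  back : ∀ A B, R A B → ∀ w ∈ tLegal G B, ∃ x ∈ zLegal H A,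
    R (A ∪ closedNF H x) (B ∪ openNF G w)

theorem IsZTBisimulation.zVal_eq_tVal {α : Type*} [Fintype α] [Fintype V] {H : SimpleGraph α}
    {G : SimpleGraph V} {R : Finset α → Finset V → Prop} (hR : IsZTBisimulation H G R)
    {A : Finset α} {B : Finset V} (hAB : R A B) (turn : Bool) :
    zVal H turn A = tVal G turn B := by
  rw [zVal, tVal]
  by_cases hz : (zLegal H A).Nonempty
  · have ht : (tLegal G B).Nonempty :=
      let ⟨x, hx⟩ := hz
      let ⟨w, hw, _⟩ := hR.forth A B hAB x hx
      ⟨w, hw⟩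
    have forth (t : Bool) : ∀ x ∈ (zLegal H A).attach, ∃ w ∈ (tLegal G B).attach,
        zVal H t (A ∪ closedNF H x.1) = tVal G t (B ∪ openNF G w.1) := by
      rintro ⟨x, hx⟩ -
      obtain ⟨w, hw, hR'⟩ := hR.forth A B hAB x hx
      exact ⟨⟨w, hw⟩, mem_attach _ _, hR.zVal_eq_tVal hR' _⟩
    have back (t : Bool) : ∀ w ∈ (tLegal G B).attach, ∃ x ∈ (zLegal H A).attach,
        zVal H t (A ∪ closedNF H x.1) = tVal G t (B ∪ openNF G w.1) := by
      rintro ⟨w, hw⟩ -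
      obtain ⟨x, hx, hR'⟩ := hR.back A B hAB w hw
      exact ⟨⟨x, hx⟩, mem_attach _ _, hR.zVal_eq_tVal hR' _⟩
    rw [dif_pos hz, dif_pos ht]
    cases turn
    · simp only [Bool.false_eq_true, if_false]
      rw [sup'_eq_sup'_of_forall_exists _ ht.attach (forth true) (back true)]
    · simp only [if_true]
      rw [inf'_eq_inf'_of_forall_exists _ ht.attach (forth false) (back false)]
  · have ht : ¬ (tLegal G B).Nonempty := fun ⟨w, hw⟩ =>
      let ⟨x, hx, _⟩ := hR.back A B hAB w hw
      hz ⟨x, hx⟩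
    rw [dif_neg hz, dif_neg ht]
termination_by (Finset.univ \ A).card
decreasing_by all_goals exact zLegal_dec H A ‹_›

section LexProdBot

variable [Fintype V] {G : SimpleGraph V}

lemma mem_openNF_lexProd_bot [Fintype W] {w v : V} {j i : W} :
    (v, i) ∈ openNF (lexProd G (⊥ : SimpleGraph W)) (w, j) ↔ G.Adj w v := by
  simp [openNF, lexProd]

lemma mem_closedNF_lexProd_bot [Fintype W] {w v : V} {j i : W} :
    (v, i) ∈ closedNF (lexProd G (⊥ : SimpleGraph W)) (w, j) ↔
      (v = w ∧ i = j) ∨ G.Adj w v := by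
  simp [closedNF, lexProd, Prod.ext_iff]

variable (G) in
def Corresponds (A : Finset (V × W)) (B : Finset V) : Prop :=
  (∀ v ∈ B, ∀ i, (v, i) ∈ A) ∧
    ∀ v i, (v, i) ∈ A → v ∉ B → openNF G v ⊆ B ∧ ∀ j, (v, j) ∈ A → j = i

variable (G) in
lemma corresponds_empty : Corresponds G (∅ : Finset (V × W)) ∅ :=
  ⟨fun _ hv => absurd hv (notMem_empty _), fun _ _ hv => absurd hv (notMem_empty _)⟩

variable {A : Finset (V × W)} {B : Finset V}

lemma Corresponds.forall_mem_iff [Nontrivial W] (h : Corresponds G A B) (v : V) :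
    (∀ i, (v, i) ∈ A) ↔ v ∈ B := by
  refine ⟨fun hv => ?_, fun hv => h.1 v hv⟩
  by_contra hvB
  obtain ⟨i, j, hij⟩ := exists_pair_ne W
  exact hij ((h.2 v i (hv i) hvB).2 j (hv j)).symm

lemma Corresponds.mem_zLegal_iff [Fintype W] [Nontrivial W] (h : Corresponds G A B)
    (w : V) (j : W) :
    (w, j) ∈ zLegal (lexProd G (⊥ : SimpleGraph W)) A ↔ w ∈ tLegal G B := by
  simp only [zLegal, tLegal, mem_filter, mem_univ, true_and, not_iff_not]
  constructor
  · intro hA v hv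
    exact (h.forall_mem_iff v).1 fun i => hA (mem_openNF_lexProd_bot.2 (mem_openNF.1 hv))
  · rintro hB ⟨v, i⟩ hvi
    exact h.1 v (hB (mem_openNF.2 (mem_openNF_lexProd_bot.1 hvi))) i

lemma Corresponds.union_closedNF [Fintype W] (h : Corresponds G A B) {w : V}
    (hw : w ∈ tLegal G B) (j : W) :
    Corresponds G (A ∪ closedNF (lexProd G (⊥ : SimpleGraph W)) (w, j)) (B ∪ openNF G w) := by
  have hwB : ¬ openNF G w ⊆ B := (mem_filter.1 hw).2
  have outside : ∀ v k, (v, k) ∈ A ∪ closedNF (lexProd G (⊥ : SimpleGraph W)) (w, j) →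
      v ∉ B ∪ openNF G w → v ∉ B ∧ ((v, k) ∈ A ∨ (v = w ∧ k = j)) := by
    intro v k hvk hv
    refine ⟨fun hvB => hv (mem_union_left _ hvB), ?_⟩
    refine (mem_union.1 hvk).imp id fun hvk => ?_
    exact (mem_closedNF_lexProd_bot.1 hvk).resolve_right
      fun hwv => hv (mem_union_right _ (mem_openNF.2 hwv))
  refine ⟨fun v hv i => ?_, fun v i hvi hv => ?_⟩
  · rcases mem_union.1 hv with hvB | hwv
    · exact mem_union_left _ (h.1 v hvB i)
    · exact mem_union_right _ (mem_closedNF_lexProd_bot.2 (Or.inr (mem_openNF.1 hwv)))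
  obtain ⟨hvB, hi⟩ := outside v i hvi hv
  have ne_of_mem : ∀ k, (v, k) ∈ A → v ≠ w := fun k hk hvw =>
    hwB (hvw ▸ (h.2 v k hk hvB).1)
  refine ⟨?_, fun k hk => ?_⟩
  · rcases hi with hi | ⟨rfl, -⟩
    · exact (h.2 v i hi hvB).1.trans subset_union_left
    · exact subset_union_right
  rcases hi, (outside v k hk hv).2 with ⟨hi | ⟨hvw, rfl⟩, hk | ⟨hvw', rfl⟩⟩
  · exact (h.2 v i hi hvB).2 k hk
  · exact absurd hvw' (ne_of_mem i hi)
  · exact absurd hvw (ne_of_mem k hk)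
  · rfl

lemma isZTBisimulation_corresponds [Fintype W] [Nontrivial W] :
    IsZTBisimulation (lexProd G (⊥ : SimpleGraph W)) G (Corresponds G) where
  -- `convert` identifies the classical `DecidableEq` instance of the unions in
  -- `IsZTBisimulation` with the one found for `V × W` in `union_closedNF`
  forth A B h := by
    rintro ⟨w, j⟩ hwj
    have hw := (h.mem_zLegal_iff w j).1 hwj
    exact ⟨w, hw, by convert h.union_closedNF hw j⟩
  back A B h w hw := by
    obtain ⟨j⟩ := ‹Nontrivial W›.to_nonempty
    exact ⟨(w, j), (h.mem_zLegal_iff w j).2 hw, by convert h.union_closedNF hw j⟩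

end LexProdBot

theorem gammaTg_eq_gammaZg_lexProd_bot_general {V : Type*} [Fintype V] (G : SimpleGraph V)
    (n : ℕ) (hn : 2 ≤ n) :
    gammaTg G = gammaZg (lexProd G (⊥ : SimpleGraph (Fin n))) := by
  have : Nontrivial (Fin n) := Fin.nontrivial_iff_two_le.2 hn
  exact (isZTBisimulation_corresponds.zVal_eq_tVal (corresponds_empty G) true).symm

/-- If `G` has minimum degree at least `1` and `n ≥ 2`, then
`γ_tg(G) = γ_Zg(G ∘ K̄_n)`. -/
theorem gammaTg_eq_gammaZg_lexProd_bot {V : Type*} [Fintype V] (G : SimpleGraph V)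
    (hmin : ∀ v : V, ∃ u : V, G.Adj v u) (n : ℕ) (hn : 2 ≤ n) :
    gammaTg G = gammaZg (lexProd G (⊥ : SimpleGraph (Fin n))) :=
  gammaTg_eq_gammaZg_lexProd_bot_general G n hn

end ZGamePaper
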